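/- arXiv:1810.02888 — 9 statements merged into one kernel-verified Lean document; each statement's English description precedes it below -/
import Mathlib

section
/- Suppose the noise is identically zero, i.e., ε₀ = ε₁ = 0. Fix any β₀, β₁ ∈ ℝ and c₀, c₁ ≥ 0, let c* = √(c₁² + 2c₀), and let b₁ = β₁ − c₁ if β₁ ≥ c*, b₁ = β₁ + c₁ if β₁ ≤ −c*, and b₁ = 0 otherwise, with b₀ = β₀ + β₁/2 − b₁/2. Then for every x ∈ {0,1} and every r ∈ {0,1}: (b₀ + b₁·x − β₀ − β₁·x)² ≤ (b₀ + b₁·r − β₀ − β₁·x)². That is, truthful reporting is optimal for the agent. -/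
/-- With zero noise (`ε₀ = ε₁ = 0`), the penalized estimator
`b₁ = β₁ − c₁` if `β₁ ≥ c* = √(c₁² + 2c₀)`, `b₁ = β₁ + c₁` if `β₁ ≤ −c*`,
`b₁ = 0` otherwise, `b₀ = β₀ + β₁/2 − b₁/2`, is incentive compatible:
for every `x, r ∈ {0,1}`, truthful reporting is optimal. -/
theorem stmt2 (β₀ β₁ c₀ c₁ : ℝ) (hc₀ : 0 ≤ c₀) (hc₁ : 0 ≤ c₁)
    (cstar : ℝ) (hcstar : cstar = Real.sqrt (c₁ ^ 2 + 2 * c₀))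
    (b₁ : ℝ)
    (hb₁ : b₁ =
      if cstar ≤ β₁ then β₁ - c₁
      else if β₁ ≤ -cstar then β₁ + c₁
      else 0)
    (b₀ : ℝ) (hb₀ : b₀ = β₀ + β₁ / 2 - b₁ / 2) :
    ∀ x r : ℝ, (x = 0 ∨ x = 1) → (r = 0 ∨ r = 1) →
      (b₀ + b₁ * x - β₀ - β₁ * x) ^ 2 ≤ (b₀ + b₁ * r - β₀ - β₁ * x) ^ 2 := by
  have hcs : c₁ ≤ cstar := by
    rw [hcstar]
    calc c₁ = Real.sqrt (c₁ ^ 2) := by rw [Real.sqrt_sq hc₁]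
    _ ≤ Real.sqrt (c₁ ^ 2 + 2 * c₀) := Real.sqrt_le_sqrt (by linarith)
  have hkey : 0 ≤ β₁ * b₁ := by
    rw [hb₁]
    split_ifs with h1 h2
    · nlinarith
    · nlinarith
    · simp
  subst hb₀
  rintro x r (rfl | rfl) (rfl | rfl) <;> nlinarith
end

section
/- Suppose c₀ = c₁ = 0, so that b₁ = β₁ + ε₁ − ε₀ and b₀ = β₀ + ε₀. If ε₀ and ε₁ are i.i.d. square-integrable real random variables with mean zero, then for every β₀, β₁ ∈ ℝ, every x ∈ {0,1} and every r ∈ {0,1}: E[(b₀ + b₁·x − β₀ − β₁·x)²] ≤ E[(b₀ + b₁·r − β₀ − β₁·x)²]. That is, the unpenalized (zero-penalty) estimator is incentive-compatible. -/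
/-!
Reporting truthfully leaves the loss `E[ε_x²]`. Misreporting feeds the other shock `ε_r` plus the
deterministic bias `±β₁`; since `ε_r` has mean zero the bias only adds `β₁²`, and identical
distribution gives `E[ε_r²] = E[ε_x²]`.
-/

open MeasureTheory ProbabilityTheory

section

variable {Ω : Type*} [MeasurableSpace Ω] {μ : Measure Ω} [IsProbabilityMeasure μ] {ε : Ω → ℝ}

lemma integral_const_add_sq_of_integral_eq_zero (hL2 : MemLp ε 2 μ) (hmean : ∫ ω, ε ω ∂μ = 0)
    (c : ℝ) : ∫ ω, (c + ε ω) ^ 2 ∂μ = c ^ 2 + ∫ ω, ε ω ^ 2 ∂μ := by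
  have hint : Integrable ε μ := hL2.integrable one_le_two
  have hsq : Integrable (fun ω => ε ω ^ 2) μ := hL2.integrable_sq
  have hexpand : (fun ω => (c + ε ω) ^ 2) = fun ω => c ^ 2 + (2 * c * ε ω + ε ω ^ 2) := by
    funext ω; ring
  have hlin : Integrable (fun ω => 2 * c * ε ω) μ := hint.const_mul _
  have hsum : Integrable (fun ω => 2 * c * ε ω + ε ω ^ 2) μ := hlin.add hsq
  rw [hexpand, integral_add (integrable_const _) hsum, integral_add hlin hsq,
    integral_const_mul, hmean]
  simp

lemma integral_sq_le_integral_const_add_sq {η : Ω → ℝ} (hL2 : MemLp ε 2 μ)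
    (hmean : ∫ ω, ε ω ∂μ = 0) (hsq : ∫ ω, η ω ^ 2 ∂μ = ∫ ω, ε ω ^ 2 ∂μ) (c : ℝ) :
    ∫ ω, η ω ^ 2 ∂μ ≤ ∫ ω, (c + ε ω) ^ 2 ∂μ := by
  rw [integral_const_add_sq_of_integral_eq_zero hL2 hmean, hsq]
  exact le_add_of_nonneg_left (sq_nonneg c)

end

theorem stmt3_general {Ω : Type*} [MeasurableSpace Ω] (μ : Measure Ω)
    [IsProbabilityMeasure μ] (ε₀ ε₁ : Ω → ℝ)
    (hid : IdentDistrib ε₀ ε₁ μ μ)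
    (hL2₀ : MemLp ε₀ 2 μ) (hL2₁ : MemLp ε₁ 2 μ)
    (hmean₀ : ∫ ω, ε₀ ω ∂μ = 0) (hmean₁ : ∫ ω, ε₁ ω ∂μ = 0)
    (β₀ β₁ x r : ℝ) (hx : x = 0 ∨ x = 1) (hr : r = 0 ∨ r = 1) :
    ∫ ω, ((β₀ + ε₀ ω) + (β₁ + ε₁ ω - ε₀ ω) * x - β₀ - β₁ * x) ^ 2 ∂μ ≤
      ∫ ω, ((β₀ + ε₀ ω) + (β₁ + ε₁ ω - ε₀ ω) * r - β₀ - β₁ * x) ^ 2 ∂μ := by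
  have hsq : ∫ ω, ε₀ ω ^ 2 ∂μ = ∫ ω, ε₁ ω ^ 2 ∂μ :=
    (hid.comp (measurable_id.pow_const 2)).integral_eq
  rcases hx with rfl | rfl <;> rcases hr with rfl | rfl
  · exact le_rfl
  · convert integral_sq_le_integral_const_add_sq hL2₁ hmean₁ hsq β₁ using 3 <;> ring
  · convert integral_sq_le_integral_const_add_sq hL2₀ hmean₀ hsq.symm (-β₁) using 3 <;> ring
  · exact le_rfl

/-- With zero penalties (`c₀ = c₁ = 0`), so that `b₀ = β₀ + ε₀`
and `b₁ = β₁ + ε₁ − ε₀`, and `ε₀, ε₁` i.i.d. square-integrable with mean zero,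
the unpenalized estimator is incentive-compatible: for every `β₀, β₁` and
every `x, r ∈ {0,1}`,
`E[(b₀ + b₁·x − β₀ − β₁·x)²] ≤ E[(b₀ + b₁·r − β₀ − β₁·x)²]`. -/
theorem stmt3 {Ω : Type*} [MeasurableSpace Ω] (μ : Measure Ω)
    [IsProbabilityMeasure μ] (ε₀ ε₁ : Ω → ℝ)
    (hmeas₀ : Measurable ε₀) (hmeas₁ : Measurable ε₁)
    (hindep : IndepFun ε₀ ε₁ μ) (hid : IdentDistrib ε₀ ε₁ μ μ)
    (hL2₀ : MemLp ε₀ 2 μ) (hL2₁ : MemLp ε₁ 2 μ)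
    (hmean₀ : ∫ ω, ε₀ ω ∂μ = 0) (hmean₁ : ∫ ω, ε₁ ω ∂μ = 0)
    (β₀ β₁ x r : ℝ) (hx : x = 0 ∨ x = 1) (hr : r = 0 ∨ r = 1) :
    ∫ ω, ((β₀ + ε₀ ω) + (β₁ + ε₁ ω - ε₀ ω) * x - β₀ - β₁ * x) ^ 2 ∂μ ≤
      ∫ ω, ((β₀ + ε₀ ω) + (β₁ + ε₁ ω - ε₀ ω) * r - β₀ - β₁ * x) ^ 2 ∂μ :=
  stmt3_general μ ε₀ ε₁ hid hL2₀ hL2₁ hmean₀ hmean₁ β₀ β₁ x r hx hr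
end

section
/- Let ε₀ and ε₁ be i.i.d. real random variables whose common distribution is symmetric about zero, and let φ : ℝ → ℝ be a measurable function such that φ(ε₁ − ε₀)·(ε₀ + ε₁) is integrable. Then E[φ(ε₁ − ε₀)·(ε₀ + ε₁)] = 0. -/
open MeasureTheory ProbabilityTheory

/-! The law of `(ε₀, ε₁)` is `m ⊗ m` with `m` symmetric, so it is invariant under
`(x, y) ↦ (-y, -x)`. This map fixes `y - x` and negates `x + y`, hence it negates the
integrand, and an integral that equals its own negative vanishes. -/

theorem MeasureTheory.MeasurePreserving.prodMap_comp_swap {α : Type*} [MeasurableSpace α]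
    {m : Measure α} [SFinite m] {f : α → α} (hf : MeasurePreserving f m m) :
    MeasurePreserving (fun p : α × α => (f p.2, f p.1)) (m.prod m) (m.prod m) :=
  (hf.prod hf).comp Measure.measurePreserving_swap

theorem MeasureTheory.integral_eq_zero_of_measurePreserving_of_comp_eq_neg {α E : Type*}
    [MeasurableSpace α] [NormedAddCommGroup E] [NormedSpace ℝ E] {ν : Measure α}
    {T : α → α} {g : α → E} (hT : MeasurePreserving T ν ν) (hg : AEStronglyMeasurable g ν)
    (hgT : ∀ x, g (T x) = -g x) :
    ∫ x, g x ∂ν = 0 := by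
  have hself : ∫ x, g x ∂ν = -∫ x, g x ∂ν := calc
    ∫ x, g x ∂ν = ∫ x, g x ∂(ν.map T) := by rw [hT.map_eq]
    _ = ∫ x, g (T x) ∂ν := integral_map hT.aemeasurable (by rwa [hT.map_eq])
    _ = -∫ x, g x ∂ν := by simp only [hgT, integral_neg]
  have := IsAddTorsionFree.of_isTorsionFree ℝ E
  exact self_eq_neg.mp hself

theorem stmt5_general {Ω : Type*} [MeasurableSpace Ω] (μ : Measure Ω)
    [IsProbabilityMeasure μ] (ε₀ ε₁ : Ω → ℝ)
    (hmeas₀ : Measurable ε₀) (hmeas₁ : Measurable ε₁)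
    (hindep : IndepFun ε₀ ε₁ μ) (hid : IdentDistrib ε₀ ε₁ μ μ)
    (hsym : μ.map ε₀ = μ.map (fun ω => -ε₀ ω))
    (φ : ℝ → ℝ) (hφ : Measurable φ) :
    ∫ ω, φ (ε₁ ω - ε₀ ω) * (ε₀ ω + ε₁ ω) ∂μ = 0 := by
  set m := μ.map ε₀
  have hneg : MeasurePreserving Neg.neg m m :=
    ⟨measurable_neg, by rw [Measure.map_map measurable_neg hmeas₀]; exact hsym.symm⟩
  have hlaw : μ.map (fun ω => (ε₀ ω, ε₁ ω)) = m.prod m := by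
    rw [(indepFun_iff_map_prod_eq_prod_map_map hmeas₀.aemeasurable
      hmeas₁.aemeasurable).mp hindep, ← hid.map_eq]
  have hg : Measurable fun p : ℝ × ℝ => φ (p.2 - p.1) * (p.1 + p.2) := by fun_prop
  calc ∫ ω, φ (ε₁ ω - ε₀ ω) * (ε₀ ω + ε₁ ω) ∂μ
      = ∫ p, φ (p.2 - p.1) * (p.1 + p.2) ∂(m.prod m) := by
        rw [← hlaw, integral_map (hmeas₀.prodMk hmeas₁).aemeasurable hg.aestronglyMeasurable]
    _ = 0 := integral_eq_zero_of_measurePreserving_of_comp_eq_neg hneg.prodMap_comp_swap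
        hg.aestronglyMeasurable fun p => by dsimp only; rw [neg_sub_neg]; ring

/-- If `ε₀, ε₁` are i.i.d. real random variables whose common
distribution is symmetric about zero, and `φ : ℝ → ℝ` is measurable with
`φ(ε₁ − ε₀)·(ε₀ + ε₁)` integrable, then `E[φ(ε₁ − ε₀)·(ε₀ + ε₁)] = 0`. -/
theorem stmt5 {Ω : Type*} [MeasurableSpace Ω] (μ : Measure Ω)
    [IsProbabilityMeasure μ] (ε₀ ε₁ : Ω → ℝ)
    (hmeas₀ : Measurable ε₀) (hmeas₁ : Measurable ε₁)
    (hindep : IndepFun ε₀ ε₁ μ) (hid : IdentDistrib ε₀ ε₁ μ μ)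
    (hsym : μ.map ε₀ = μ.map (fun ω => -ε₀ ω))
    (φ : ℝ → ℝ) (hφ : Measurable φ)
    (hint : Integrable (fun ω => φ (ε₁ ω - ε₀ ω) * (ε₀ ω + ε₁ ω)) μ) :
    ∫ ω, φ (ε₁ ω - ε₀ ω) * (ε₀ ω + ε₁ ω) ∂μ = 0 :=
  stmt5_general μ ε₀ ε₁ hmeas₀ hmeas₁ hindep hid hsym φ hφ
end

section
/- Let ε₀ and ε₁ be i.i.d. integrable real random variables whose common distribution is symmetric about zero, and let Δ = ε₁ − ε₀. Fix β₁ ≥ 0 and c₀, c₁ ≥ 0, set c* = √(c₁² + 2c₀), and define b₁ = β₁ + Δ − c₁ if β₁ + Δ ≥ c*, b₁ = β₁ + Δ + c₁ if β₁ + Δ ≤ −c*, and b₁ = 0 otherwise. Then E[b₁] ≥ 0. Equivalently, for arbitrary sign of β₁ (with the estimator defined from β₁ + Δ in the same way), β₁·E[b₁] ≥ 0: the penalized slope estimator's mean has the same sign as the true coefficient β₁. -/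
/-!
Write `g` for the thresholding map `x ↦ b₁` and `Δ = ε₁ − ε₀`. Since `ε₀, ε₁` are i.i.d., the
pairs `(ε₀, ε₁)` and `(ε₁, ε₀)` have the same law, so `Δ` is symmetric. The map `g` is odd, hence
`E[g(Δ)] = 0`, and `g` is monotone because `c₁ ≤ c*` (the jump of `g` at `±c*` has size
`c* − c₁ ≥ 0`). Therefore `E[g(β₁ + Δ)]` lies above `E[g(Δ)] = 0` when `β₁ ≥ 0` and below it when
`β₁ ≤ 0`.
-/

open MeasureTheory ProbabilityTheory

noncomputable section

def penalizedSlope (c₁ cstar x : ℝ) : ℝ :=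
  if cstar ≤ x then x - c₁ else if x ≤ -cstar then x + c₁ else 0

namespace penalizedSlope

variable {c₁ cstar : ℝ}

lemma neg (h : |c₁| ≤ cstar) (x : ℝ) :
    penalizedSlope c₁ cstar (-x) = -penalizedSlope c₁ cstar x := by
  have := abs_le.mp h
  unfold penalizedSlope
  split_ifs <;> linarith

lemma monotone (h : c₁ ≤ cstar) : Monotone (penalizedSlope c₁ cstar) := by
  intro x y hxy
  unfold penalizedSlope
  split_ifs <;> linarith

lemma abs_le_abs_add (c₁ cstar x : ℝ) : |penalizedSlope c₁ cstar x| ≤ |x| + |c₁| := by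
  unfold penalizedSlope
  split_ifs
  · exact abs_sub _ _
  · exact abs_add_le _ _
  · simp only [abs_zero]; positivity

@[fun_prop]
lemma measurable (c₁ cstar : ℝ) : Measurable (penalizedSlope c₁ cstar) :=
  Measurable.ite (measurableSet_le measurable_const measurable_id) (by fun_prop)
    (Measurable.ite (measurableSet_le measurable_id measurable_const) (by fun_prop) (by fun_prop))

lemma integrable_comp {Ω : Type*} [MeasurableSpace Ω] {μ : Measure Ω} [IsFiniteMeasure μ]
    {X : Ω → ℝ} (hX : Integrable X μ) (c₁ cstar : ℝ) :
    Integrable (fun ω => penalizedSlope c₁ cstar (X ω)) μ :=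
  (hX.abs.add (integrable_const |c₁|)).mono'
    ((measurable c₁ cstar).comp_aemeasurable hX.aemeasurable).aestronglyMeasurable
    (ae_of_all _ fun ω => abs_le_abs_add c₁ cstar (X ω))

end penalizedSlope

lemma abs_le_sqrt_sq_add {a b : ℝ} (hb : 0 ≤ b) : |a| ≤ Real.sqrt (a ^ 2 + b) := by
  rw [← Real.sqrt_sq_eq_abs]
  exact Real.sqrt_le_sqrt (by linarith)

namespace ProbabilityTheory

variable {Ω : Type*} [MeasurableSpace Ω] {μ : Measure Ω}

lemma IndepFun.identDistrib_sub_neg [IsFiniteMeasure μ] {X Y : Ω → ℝ} (hXY : IndepFun X Y μ)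
    (hid : IdentDistrib X Y μ μ) :
    IdentDistrib (fun ω => Y ω - X ω) (fun ω => -(Y ω - X ω)) μ μ := by
  have hswap := hid.prodMk hid.symm hXY hXY.symm
  simpa only [Function.comp_def, neg_sub] using
    hswap.comp (show Measurable fun p : ℝ × ℝ => p.2 - p.1 by fun_prop)

variable {Z : Ω → ℝ} {f : ℝ → ℝ}

lemma IdentDistrib.integral_comp_eq_zero_of_odd (hZ : IdentDistrib Z (fun ω => -Z ω) μ μ)
    (hf : Measurable f) (hodd : ∀ x, f (-x) = -f x) : ∫ ω, f (Z ω) ∂μ = 0 := by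
  have h := (hZ.comp hf).integral_eq
  simp only [Function.comp_def, hodd, integral_neg] at h
  linarith

variable (hZ : IdentDistrib Z (fun ω => -Z ω) μ μ) (hf : Measurable f)
  (hodd : ∀ x, f (-x) = -f x) (hmono : Monotone f) {β : ℝ}
  (hint₀ : Integrable (fun ω => f (Z ω)) μ) (hint : Integrable (fun ω => f (β + Z ω)) μ)
include hZ hf hodd hmono hint₀ hint

lemma IdentDistrib.integral_comp_add_nonneg (hβ : 0 ≤ β) : 0 ≤ ∫ ω, f (β + Z ω) ∂μ :=
  calc 0 = ∫ ω, f (Z ω) ∂μ := (hZ.integral_comp_eq_zero_of_odd hf hodd).symm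
    _ ≤ ∫ ω, f (β + Z ω) ∂μ := integral_mono hint₀ hint fun ω => hmono (by linarith)

lemma IdentDistrib.integral_comp_add_nonpos (hβ : β ≤ 0) : ∫ ω, f (β + Z ω) ∂μ ≤ 0 :=
  calc ∫ ω, f (β + Z ω) ∂μ ≤ ∫ ω, f (Z ω) ∂μ :=
        integral_mono hint hint₀ fun ω => hmono (by linarith)
    _ = 0 := hZ.integral_comp_eq_zero_of_odd hf hodd

end ProbabilityTheory

end

theorem stmt6_general {Ω : Type*} [MeasurableSpace Ω] (μ : Measure Ω)
    [IsProbabilityMeasure μ] (ε₀ ε₁ : Ω → ℝ)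
    (hint₀ : Integrable ε₀ μ) (hint₁ : Integrable ε₁ μ)
    (hindep : IndepFun ε₀ ε₁ μ) (hid : IdentDistrib ε₀ ε₁ μ μ)
    (β₁ c₀ c₁ : ℝ) (hc₀ : 0 ≤ c₀)
    (cstar : ℝ) (hcstar : cstar = Real.sqrt (c₁ ^ 2 + 2 * c₀))
    (b₁ : Ω → ℝ)
    (hb₁ : ∀ ω, b₁ ω =
      if cstar ≤ β₁ + (ε₁ ω - ε₀ ω) then β₁ + (ε₁ ω - ε₀ ω) - c₁
      else if β₁ + (ε₁ ω - ε₀ ω) ≤ -cstar then β₁ + (ε₁ ω - ε₀ ω) + c₁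
      else 0) :
    (0 ≤ β₁ → 0 ≤ ∫ ω, b₁ ω ∂μ) ∧ 0 ≤ β₁ * ∫ ω, b₁ ω ∂μ := by
  have hc : |c₁| ≤ cstar := hcstar ▸ abs_le_sqrt_sq_add (by positivity)
  have hb : b₁ = fun ω => penalizedSlope c₁ cstar (β₁ + (ε₁ ω - ε₀ ω)) := funext hb₁
  have hΔ := hindep.identDistrib_sub_neg hid
  have hΔint := hint₁.sub hint₀
  have hg := penalizedSlope.integrable_comp hΔint c₁ cstar
  have hβg := penalizedSlope.integrable_comp ((integrable_const β₁).add hΔint) c₁ cstar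
  have hmono := penalizedSlope.monotone ((le_abs_self c₁).trans hc)
  have hpos (hβ : 0 ≤ β₁) : 0 ≤ ∫ ω, b₁ ω ∂μ := hb ▸
    hΔ.integral_comp_add_nonneg (penalizedSlope.measurable c₁ cstar) (penalizedSlope.neg hc)
      hmono hg hβg hβ
  refine ⟨hpos, ?_⟩
  rcases le_total 0 β₁ with hβ | hβ
  · exact mul_nonneg hβ (hpos hβ)
  · exact mul_nonneg_of_nonpos_of_nonpos hβ <| hb ▸
      hΔ.integral_comp_add_nonpos (penalizedSlope.measurable c₁ cstar) (penalizedSlope.neg hc)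
        hmono hg hβg hβ

/-- Let `ε₀, ε₁` be i.i.d. integrable, symmetric about zero, and
`Δ = ε₁ − ε₀`. With `c* = √(c₁² + 2c₀)` and the penalized slope estimator
`b₁ = β₁ + Δ − c₁` if `β₁ + Δ ≥ c*`, `b₁ = β₁ + Δ + c₁` if `β₁ + Δ ≤ −c*`,
`b₁ = 0` otherwise: if `β₁ ≥ 0` then `E[b₁] ≥ 0`; and for arbitrary sign of
`β₁`, `β₁ · E[b₁] ≥ 0`. -/
theorem stmt6 {Ω : Type*} [MeasurableSpace Ω] (μ : Measure Ω)
    [IsProbabilityMeasure μ] (ε₀ ε₁ : Ω → ℝ)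
    (hmeas₀ : Measurable ε₀) (hmeas₁ : Measurable ε₁)
    (hint₀ : Integrable ε₀ μ) (hint₁ : Integrable ε₁ μ)
    (hindep : IndepFun ε₀ ε₁ μ) (hid : IdentDistrib ε₀ ε₁ μ μ)
    (hsym : μ.map ε₀ = μ.map (fun ω => -ε₀ ω))
    (β₁ c₀ c₁ : ℝ) (hc₀ : 0 ≤ c₀) (hc₁ : 0 ≤ c₁)
    (cstar : ℝ) (hcstar : cstar = Real.sqrt (c₁ ^ 2 + 2 * c₀))
    (b₁ : Ω → ℝ)
    (hb₁ : ∀ ω, b₁ ω =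
      if cstar ≤ β₁ + (ε₁ ω - ε₀ ω) then β₁ + (ε₁ ω - ε₀ ω) - c₁
      else if β₁ + (ε₁ ω - ε₀ ω) ≤ -cstar then β₁ + (ε₁ ω - ε₀ ω) + c₁
      else 0) :
    (0 ≤ β₁ → 0 ≤ ∫ ω, b₁ ω ∂μ) ∧ 0 ≤ β₁ * ∫ ω, b₁ ω ∂μ :=
  stmt6_general μ ε₀ ε₁ hint₀ hint₁ hindep hid β₁ c₀ c₁ hc₀ cstar hcstar b₁ hb₁
end

section
/- Suppose ε₀ and ε₁ are i.i.d. integrable real random variables whose common distribution is symmetric about zero. Fix any β₀, β₁ ∈ ℝ and c₀, c₁ ≥ 0, let c* = √(c₁² + 2c₀), and define b₁ = β₁ + ε₁ − ε₀ − c₁ if β₁ + ε₁ − ε₀ ≥ c*, b₁ = β₁ + ε₁ − ε₀ + c₁ if β₁ + ε₁ − ε₀ ≤ −c*, and b₁ = 0 otherwise, with b₀ = (y₀ + y₁ − b₁)/2 where y₀ = β₀ + ε₀ and y₁ = β₀ + β₁ + ε₁. Then for every x ∈ {0,1} and r ∈ {0,1}: E[(b₀ + b₁·x − β₀ − β₁·x)²]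 ≤ E[(b₀ + b₁·r − β₀ − β₁·x)²]. That is, the penalized estimator is incentive-compatible under symmetrically distributed noise. -/
/-!
With `Z = β₁ + ε₁ - ε₀` and `S = ε₀ + ε₁`, the estimator is `b₁ = f Z` for a monotone odd `f`
(the thresholding rule) with `f z - z` bounded, and misreporting changes the expected loss by
`E[b₁ (β₁ ± S)] = β₁ E[b₁] ± E[b₁ S]`. The law of `(ε₀, ε₁)` is invariant under
`(ε₀, ε₁) ↦ (-ε₁, -ε₀)`, which fixes `Z` and flips `S`, so `E[b₁ S] = 0`; it is also invariant
under the swap, which sends `Z` to `2β₁ - Z`, so `2β₁ E[f Z] = E[β₁ (f (β₁ + D) + f (β₁ - D))] ≥ 0`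
with `D = ε₁ - ε₀`, by monotonicity and oddness of `f`.
-/

open MeasureTheory ProbabilityTheory

-- `threshold c* c₁ (y₁ - y₀)` is the penalized estimate `b₁`
noncomputable def threshold (t c z : ℝ) : ℝ :=
  if t ≤ z then z - c else if z ≤ -t then z + c else 0

section Threshold

variable {t c : ℝ}

lemma threshold_monotone (hct : c ≤ t) : Monotone (threshold t c) := by
  intro a b hab
  unfold threshold
  split_ifs <;> linarith

lemma threshold_neg (hc : 0 ≤ c) (hct : c ≤ t) (z : ℝ) :
    threshold t c (-z) = -threshold t c z := by
  unfold threshold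
  split_ifs <;> linarith

lemma abs_threshold_sub_le (hc : 0 ≤ c) (hct : c ≤ t) (z : ℝ) : |threshold t c z - z| ≤ t := by
  rw [abs_le]
  unfold threshold
  split_ifs <;> constructor <;> linarith

end Threshold

lemma mul_add_nonneg_of_monotone_of_odd {f : ℝ → ℝ} (hf : Monotone f)
    (hodd : ∀ z, f (-z) = -f z) (b d : ℝ) : 0 ≤ b * (f (b + d) + f (b - d)) := by
  have h := hodd (b - d)
  rcases le_total 0 b with hb | hb
  · have : f (-(b - d)) ≤ f (b + d) := hf (by linarith)
    exact mul_nonneg hb (by linarith)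
  · have : f (b + d) ≤ f (-(b - d)) := hf (by linarith)
    exact mul_nonneg_of_nonpos_of_nonpos hb (by linarith)

section Integrals

variable {Ω : Type*} [MeasurableSpace Ω] {μ : Measure Ω}

lemma memLp_iff_of_norm_sub_le [IsFiniteMeasure μ] {E : Type*} [NormedAddCommGroup E]
    {p : ENNReal} {f g : Ω → E} (hf : AEStronglyMeasurable f μ) (hg : AEStronglyMeasurable g μ)
    (C : ℝ) (h : ∀ ω, ‖f ω - g ω‖ ≤ C) : MemLp f p μ ↔ MemLp g p μ := by
  have hfg : MemLp (f - g) p μ := .of_bound (hf.sub hg) C (ae_of_all _ h)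
  exact ⟨fun hf' => by simpa using hf'.sub hfg, fun hg' => by simpa using hg'.add hfg⟩

lemma integral_sq_sub_le_integral_sq_add [IsFiniteMeasure μ] {b s : Ω → ℝ} {β : ℝ}
    (hb : AEStronglyMeasurable b μ) (hs : AEStronglyMeasurable s μ)
    (hL2 : MemLp (fun ω => (β - b ω + s ω) / 2) 2 μ ↔ MemLp (fun ω => (β + b ω + s ω) / 2) 2 μ)
    (hbs : ∫ ω, b ω * s ω ∂μ = 0) (hβb : 0 ≤ β * ∫ ω, b ω ∂μ) :
    ∫ ω, ((β - b ω + s ω) / 2) ^ 2 ∂μ ≤ ∫ ω, ((β + b ω + s ω) / 2) ^ 2 ∂μ := by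
  by_cases hL : MemLp (fun ω => (β - b ω + s ω) / 2) 2 μ
  · have hR := hL2.mp hL
    have hb2 : MemLp b 2 μ := by
      convert hR.sub hL using 1
      funext ω; simp only [Pi.sub_apply]; ring
    have hs2 : MemLp s 2 μ := by
      convert (hR.add hL).sub (memLp_const β) using 1
      funext ω; simp only [Pi.sub_apply, Pi.add_apply]; ring
    have hbs1 : Integrable (fun ω => b ω * s ω) μ := hb2.integrable_mul hs2
    have hgain : ∫ ω, ((β + b ω + s ω) / 2) ^ 2 ∂μ - ∫ ω, ((β - b ω + s ω) / 2) ^ 2 ∂μ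
        = β * ∫ ω, b ω ∂μ + ∫ ω, b ω * s ω ∂μ := by
      rw [← integral_sub hR.integrable_sq hL.integrable_sq, ← integral_const_mul,
        ← integral_add ((hb2.integrable one_le_two).const_mul β) hbs1]
      congr 1; funext ω; ring
    linarith
  · -- both expected losses are infinite, i.e. the junk value `0`
    have hR := mt hL2.mpr hL
    rw [memLp_two_iff_integrable_sq (by fun_prop)] at hL hR
    rw [integral_undef hL, integral_undef hR]

variable {ε₀ ε₁ : Ω → ℝ}

lemma integral_comp_sub_mul_add_eq_zero
    (hneg : IdentDistrib (fun ω => (ε₀ ω, ε₁ ω)) (fun ω => (-ε₁ ω, -ε₀ ω)) μ μ)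
    {f : ℝ → ℝ} (hf : Measurable f) (β : ℝ) :
    ∫ ω, f (β + ε₁ ω - ε₀ ω) * (ε₀ ω + ε₁ ω) ∂μ = 0 := by
  have h := (hneg.comp (u := fun p : ℝ × ℝ => f (β + p.2 - p.1) * (p.1 + p.2))
    (by fun_prop)).integral_eq
  simp only [Function.comp_def, sub_neg_eq_add] at h
  have hflip : ∫ ω, f (β + -ε₀ ω + ε₁ ω) * (-ε₁ ω + -ε₀ ω) ∂μ
      = -∫ ω, f (β + ε₁ ω - ε₀ ω) * (ε₀ ω + ε₁ ω) ∂μ := by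
    rw [← integral_neg]; congr 1; funext ω; ring_nf
  linarith

lemma mul_integral_comp_nonneg
    (hswap : IdentDistrib (fun ω => (ε₀ ω, ε₁ ω)) (fun ω => (ε₁ ω, ε₀ ω)) μ μ)
    {f : ℝ → ℝ} (hf : Monotone f) (hodd : ∀ z, f (-z) = -f z) (β : ℝ) :
    0 ≤ β * ∫ ω, f (β + ε₁ ω - ε₀ ω) ∂μ := by
  have hfm := hf.measurable
  have h := hswap.comp (u := fun p : ℝ × ℝ => f (β + p.2 - p.1)) (by fun_prop)
  simp only [Function.comp_def] at h
  by_cases hint : Integrable (fun ω => f (β + ε₁ ω - ε₀ ω)) μ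
  · have hsum : 0 ≤ ∫ ω, β * (f (β + ε₁ ω - ε₀ ω) + f (β + ε₀ ω - ε₁ ω)) ∂μ :=
      integral_nonneg fun ω => by
        have := mul_add_nonneg_of_monotone_of_odd hf hodd β (ε₁ ω - ε₀ ω)
        rwa [← add_sub_assoc, sub_sub_eq_add_sub] at this
    rw [integral_const_mul, integral_add hint (h.integrable_iff.mp hint), ← h.integral_eq] at hsum
    linarith
  · rw [integral_undef hint, mul_zero]

lemma integral_sq_sub_comp_le_integral_sq_add_comp [IsFiniteMeasure μ]
    (hswap : IdentDistrib (fun ω => (ε₀ ω, ε₁ ω)) (fun ω => (ε₁ ω, ε₀ ω)) μ μ)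
    (hneg : IdentDistrib (fun ω => (ε₀ ω, ε₁ ω)) (fun ω => (-ε₁ ω, -ε₀ ω)) μ μ)
    {f : ℝ → ℝ} (hf : Monotone f) (hodd : ∀ z, f (-z) = -f z) {C : ℝ}
    (hC : ∀ z, |f z - z| ≤ C) (β : ℝ) :
    ∫ ω, ((β - f (β + ε₁ ω - ε₀ ω) + (ε₀ ω + ε₁ ω)) / 2) ^ 2 ∂μ ≤
      ∫ ω, ((β + f (β + ε₁ ω - ε₀ ω) + (ε₀ ω + ε₁ ω)) / 2) ^ 2 ∂μ := by
  have hε₀ : AEStronglyMeasurable ε₀ μ := hswap.aemeasurable_fst.fst.aestronglyMeasurable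
  have hε₁ : AEStronglyMeasurable ε₁ μ := hswap.aemeasurable_fst.snd.aestronglyMeasurable
  have hfZ (ω : Ω) := abs_le.mp (hC (β + ε₁ ω - ε₀ ω))
  have hb : AEStronglyMeasurable (fun ω => f (β + ε₁ ω - ε₀ ω)) μ :=
    (hf.measurable.comp_aemeasurable (by fun_prop)).aestronglyMeasurable
  refine integral_sq_sub_le_integral_sq_add hb (by fun_prop) ?_
    (integral_comp_sub_mul_add_eq_zero hneg hf.measurable β)
    (mul_integral_comp_nonneg hswap hf hodd β)
  set b := fun ω => f (β + ε₁ ω - ε₀ ω)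
  have hL : MemLp (fun ω => (β - b ω + (ε₀ ω + ε₁ ω)) / 2) 2 μ ↔ MemLp ε₀ 2 μ :=
    memLp_iff_of_norm_sub_le (by fun_prop) hε₀ (C / 2) fun ω => by
      rw [Real.norm_eq_abs, abs_le]
      constructor <;> linarith [hfZ ω]
  have hR : MemLp (fun ω => (β + b ω + (ε₀ ω + ε₁ ω)) / 2) 2 μ ↔ MemLp ε₁ 2 μ :=
    memLp_iff_of_norm_sub_le (by fun_prop) hε₁ (|β| + C / 2) fun ω => by
      rw [Real.norm_eq_abs, abs_le]
      constructor <;> linarith [hfZ ω, le_abs_self β, neg_abs_le β]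
  exact hL.trans ((hswap.comp measurable_fst).memLp_iff.trans hR.symm)

end Integrals

theorem stmt7_general {Ω : Type*} [MeasurableSpace Ω] (μ : Measure Ω)
    [IsProbabilityMeasure μ] (ε₀ ε₁ : Ω → ℝ)
    (hindep : IndepFun ε₀ ε₁ μ) (hid : IdentDistrib ε₀ ε₁ μ μ)
    (hsym : μ.map ε₀ = μ.map (fun ω => -ε₀ ω))
    (β₀ β₁ c₀ c₁ : ℝ) (hc₀ : 0 ≤ c₀) (hc₁ : 0 ≤ c₁)
    (cstar : ℝ) (hcstar : cstar = Real.sqrt (c₁ ^ 2 + 2 * c₀))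
    (b₁ : Ω → ℝ)
    (hb₁ : ∀ ω, b₁ ω =
      if cstar ≤ β₁ + ε₁ ω - ε₀ ω then β₁ + ε₁ ω - ε₀ ω - c₁
      else if β₁ + ε₁ ω - ε₀ ω ≤ -cstar then β₁ + ε₁ ω - ε₀ ω + c₁
      else 0)
    (y₀ y₁ b₀ : Ω → ℝ)
    (hy₀ : ∀ ω, y₀ ω = β₀ + ε₀ ω) (hy₁ : ∀ ω, y₁ ω = β₀ + β₁ + ε₁ ω)
    (hb₀ : ∀ ω, b₀ ω = (y₀ ω + y₁ ω - b₁ ω) / 2) :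
    ∀ x r : ℝ, (x = 0 ∨ x = 1) → (r = 0 ∨ r = 1) →
      ∫ ω, (b₀ ω + b₁ ω * x - β₀ - β₁ * x) ^ 2 ∂μ ≤
        ∫ ω, (b₀ ω + b₁ ω * r - β₀ - β₁ * x) ^ 2 ∂μ := by
  intro x r hx hr
  obtain rfl : b₁ = fun ω => threshold cstar c₁ (β₁ + ε₁ ω - ε₀ ω) := funext hb₁
  obtain rfl := funext hy₀
  obtain rfl := funext hy₁
  obtain rfl := funext hb₀
  beta_reduce
  have hct : c₁ ≤ cstar := hcstar ▸ Real.le_sqrt_of_sq_le (by linarith)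
  have hmono := threshold_monotone hct
  have hodd := threshold_neg hc₁ hct
  have hC := abs_threshold_sub_le hc₁ hct
  have hε₀ : IdentDistrib ε₀ (fun ω => -ε₀ ω) μ μ :=
    ⟨hid.aemeasurable_fst, hid.aemeasurable_fst.neg, hsym⟩
  have hswap := hid.prodMk hid.symm hindep hindep.symm
  have hneg : IdentDistrib (fun ω => (ε₀ ω, ε₁ ω)) (fun ω => (-ε₁ ω, -ε₀ ω)) μ μ :=
    (hε₀.trans (hid.comp measurable_neg)).prodMk (hid.symm.trans hε₀) hindep
      (hindep.symm.comp measurable_neg measurable_neg)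
  rcases hx with rfl | rfl <;> rcases hr with rfl | rfl
  · exact le_rfl
  · convert integral_sq_sub_comp_le_integral_sq_add_comp hswap hneg hmono hodd hC β₁
      using 3 <;> ring
  · -- `(-ε₁, -ε₀)` has the same `Z` and the opposite `S`, which turns `x = 1` into `x = 0`
    have hflip : Measurable fun p : ℝ × ℝ => (-p.2, -p.1) := by fun_prop
    convert integral_sq_sub_comp_le_integral_sq_add_comp (hswap.comp hflip) (hneg.comp hflip)
      hmono hodd hC β₁ using 3 <;> ring_nf
  · exact le_rfl

/-- With `ε₀, ε₁` i.i.d. integrable and symmetric about zero,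
the penalized estimator (`b₁ = β₁ + ε₁ − ε₀ − c₁` if `β₁ + ε₁ − ε₀ ≥ c*`,
`b₁ = β₁ + ε₁ − ε₀ + c₁` if `β₁ + ε₁ − ε₀ ≤ −c*`, `b₁ = 0` otherwise,
`c* = √(c₁² + 2c₀)`, `b₀ = (y₀ + y₁ − b₁)/2`) is incentive-compatible:
for every `β₀, β₁` and every `x, r ∈ {0,1}`,
`E[(b₀ + b₁·x − β₀ − β₁·x)²] ≤ E[(b₀ + b₁·r − β₀ − β₁·x)²]`. -/
theorem stmt7 {Ω : Type*} [MeasurableSpace Ω] (μ : Measure Ω)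
    [IsProbabilityMeasure μ] (ε₀ ε₁ : Ω → ℝ)
    (hmeas₀ : Measurable ε₀) (hmeas₁ : Measurable ε₁)
    (hint₀ : Integrable ε₀ μ) (hint₁ : Integrable ε₁ μ)
    (hindep : IndepFun ε₀ ε₁ μ) (hid : IdentDistrib ε₀ ε₁ μ μ)
    (hsym : μ.map ε₀ = μ.map (fun ω => -ε₀ ω))
    (β₀ β₁ c₀ c₁ : ℝ) (hc₀ : 0 ≤ c₀) (hc₁ : 0 ≤ c₁)
    (cstar : ℝ) (hcstar : cstar = Real.sqrt (c₁ ^ 2 + 2 * c₀))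
    (b₁ : Ω → ℝ)
    (hb₁ : ∀ ω, b₁ ω =
      if cstar ≤ β₁ + ε₁ ω - ε₀ ω then β₁ + ε₁ ω - ε₀ ω - c₁
      else if β₁ + ε₁ ω - ε₀ ω ≤ -cstar then β₁ + ε₁ ω - ε₀ ω + c₁
      else 0)
    (y₀ y₁ b₀ : Ω → ℝ)
    (hy₀ : ∀ ω, y₀ ω = β₀ + ε₀ ω) (hy₁ : ∀ ω, y₁ ω = β₀ + β₁ + ε₁ ω)
    (hb₀ : ∀ ω, b₀ ω = (y₀ ω + y₁ ω - b₁ ω) / 2) :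
    ∀ x r : ℝ, (x = 0 ∨ x = 1) → (r = 0 ∨ r = 1) →
      ∫ ω, (b₀ ω + b₁ ω * x - β₀ - β₁ * x) ^ 2 ∂μ ≤
        ∫ ω, (b₀ ω + b₁ ω * r - β₀ - β₁ * x) ^ 2 ∂μ :=
  stmt7_general μ ε₀ ε₁ hindep hid hsym β₀ β₁ c₀ c₁ hc₀ hc₁ cstar hcstar b₁ hb₁ y₀ y₁ b₀ hy₀ hy₁ hb₀
end

section
/- Let p ∈ (1/2, 1) and d = p/(1−p) > 1, and let ε₀, ε₁ be i.i.d. random variables each equal to −1 with probability p and to d with probability 1 − p (so E[εₓ] = 0). Fix c₁ = 0 and c₀ > 0, β₁ > 0, β₀ ∈ ℝ such that β₁ < √(2c₀), d + 1 − β₁ < √(2c₀) ≤ d + 1 + β₁, and β₁ < d − 1. Define b₁ = β₁ + ε₁ − ε₀ if (β₁ + ε₁ − ε₀)² ≥ 2c₀ and b₁ = 0 otherwise, and b₀ = (y₀ + y₁ − b₁)/2 with y₀ = β₀ + ε₀, y₁ = β₀ + β₁ + ε₁. Then E[(b₀ + b₁ − β₀ − β₁)²] > E[(b₀ − β₀ −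 β₁)²]: an agent with characteristic x = 1 is strictly better off misreporting r = 0, so the estimator is not incentive-compatible. -/
/-!
Since `b₀ - β₀ - β₁ = (ε₀ + ε₁ - β₁ - b₁) / 2` and `b₀ + b₁ - β₀ - β₁ = (ε₀ + ε₁ - β₁ + b₁) / 2`,
the two squared errors agree wherever `b₁ = 0`. Of the four noise pairs only `(ε₀, ε₁) = (-1, d)`
clears the threshold `√(2 c₀)`; there the errors are `(β₁ + 1)²` and `d²`, and `β₁ + 1 < d`.
So reporting `r = 0` gains `p (1 - p) (d² - (β₁ + 1)²) > 0`.
-/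

open MeasureTheory ProbabilityTheory unitInterval

lemma ofReal_smul_dirac_add_eq_bernoulliMeasure {X : Type*} [MeasurableSpace X] (x y : X)
    (p : I) :
    ENNReal.ofReal p • Measure.dirac x + ENNReal.ofReal (1 - p) • Measure.dirac y =
      Ber(x, y, p) := by
  have h : ∀ t : I, ENNReal.ofReal t = toNNReal t := fun t => by
    rw [ENNReal.ofReal, Real.toNNReal_of_nonneg t.2.1]; rfl
  rw [h, ← coe_symm_eq, h]
  rfl

lemma integral_bernoulliMeasure_prod {X Y E : Type*} [MeasurableSpace X] [MeasurableSpace Y]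
    [MeasurableSingletonClass X] [MeasurableSingletonClass Y]
    [NormedAddCommGroup E] [NormedSpace ℝ E] [CompleteSpace E]
    {f : X × Y → E} {x y : X} {x' y' : Y} {p q : I}
    (hf : AEStronglyMeasurable f (Ber(x, y, p).prod Ber(x', y', q))) :
    ∫ z, f z ∂(Ber(x, y, p).prod Ber(x', y', q)) =
      (p : ℝ) • ((q : ℝ) • f (x, x') + (1 - q : ℝ) • f (x, y')) +
        (1 - p : ℝ) • ((q : ℝ) • f (y, x') + (1 - q : ℝ) • f (y, y')) := by
  have hint : Integrable f (Ber(x, y, p).prod Ber(x', y', q)) :=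
    (integrable_prod_iff hf).2 ⟨ae_of_all _ fun _ => integrable_bernoulliMeasure _ _ _ _,
      integrable_bernoulliMeasure _ _ _ _⟩
  simp only [integral_prod f hint, integral_bernoulliMeasure]

lemma integral_comp_of_indepFun_of_map_eq_bernoulliMeasure {Ω : Type*} [MeasurableSpace Ω]
    {μ : Measure Ω} [IsProbabilityMeasure μ] {X Y : Ω → ℝ} (hX : Measurable X) (hY : Measurable Y)
    (hXY : IndepFun X Y μ) {x y x' y' : ℝ} {p q : I} (hlawX : μ.map X = Ber(x, y, p))
    (hlawY : μ.map Y = Ber(x', y', q)) {G : ℝ → ℝ → ℝ} (hG : Measurable (Function.uncurry G)) :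
    ∫ ω, G (X ω) (Y ω) ∂μ =
      p * (q * G x x' + (1 - q) * G x y') + (1 - p) * (q * G y x' + (1 - q) * G y y') := by
  have hlaw : μ.map (fun ω => (X ω, Y ω)) = Ber(x, y, p).prod Ber(x', y', q) := by
    rw [(indepFun_iff_map_prod_eq_prod_map_map hX.aemeasurable hY.aemeasurable).1 hXY, hlawX, hlawY]
  calc ∫ ω, G (X ω) (Y ω) ∂μ = ∫ z, Function.uncurry G z ∂(μ.map fun ω => (X ω, Y ω)) :=
        (integral_map (hX.prodMk hY).aemeasurable hG.aestronglyMeasurable).symm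
    _ = _ := by
        rw [hlaw, integral_bernoulliMeasure_prod (hlaw ▸ hG.aestronglyMeasurable)]
        simp only [Function.uncurry_apply_pair, smul_eq_mul]

/-- The slope `b₁` as a function of the noise values `e₀ = ε₀`, `e₁ = ε₁`. -/
noncomputable def selectedSlope (c₀ β₁ e₀ e₁ : ℝ) : ℝ :=
  if 2 * c₀ ≤ (β₁ + e₁ - e₀) ^ 2 then β₁ + e₁ - e₀ else 0

section selectedSlope

variable {c₀ β₁ e₀ e₁ : ℝ}

lemma selectedSlope_of_abs_lt (h : |β₁ + e₁ - e₀| < √(2 * c₀)) :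
    selectedSlope c₀ β₁ e₀ e₁ = 0 :=
  if_neg (not_le.2 (Real.sq_lt.2 (abs_lt.1 h)))

lemma selectedSlope_of_sqrt_le (h : √(2 * c₀) ≤ β₁ + e₁ - e₀) :
    selectedSlope c₀ β₁ e₀ e₁ = β₁ + e₁ - e₀ :=
  if_pos (Real.sqrt_le_iff.1 h).2

@[fun_prop]
lemma measurable_selectedSlope (c₀ β₁ : ℝ) :
    Measurable fun e : ℝ × ℝ => selectedSlope c₀ β₁ e.1 e.2 :=
  Measurable.ite (measurableSet_le measurable_const (by fun_prop)) (by fun_prop) measurable_const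

end selectedSlope

theorem stmt8_general {Ω : Type*} [MeasurableSpace Ω] (μ : Measure Ω)
    [IsProbabilityMeasure μ]
    (p d : ℝ) (hp : 1 / 2 < p ∧ p < 1)
    (ε₀ ε₁ : Ω → ℝ)
    (hmeas₀ : Measurable ε₀) (hmeas₁ : Measurable ε₁)
    (hindep : IndepFun ε₀ ε₁ μ)
    (hdist₀ : μ.map ε₀ =
      ENNReal.ofReal p • Measure.dirac (-1 : ℝ)
        + ENNReal.ofReal (1 - p) • Measure.dirac d)
    (hdist₁ : μ.map ε₁ =
      ENNReal.ofReal p • Measure.dirac (-1 : ℝ)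
        + ENNReal.ofReal (1 - p) • Measure.dirac d)
    (β₀ β₁ c₀ : ℝ) (hβ₁ : 0 < β₁)
    (h1 : β₁ < Real.sqrt (2 * c₀))
    (h2 : d + 1 - β₁ < Real.sqrt (2 * c₀))
    (h3 : Real.sqrt (2 * c₀) ≤ d + 1 + β₁)
    (h4 : β₁ < d - 1)
    (b₁ : Ω → ℝ)
    (hb₁ : ∀ ω, b₁ ω =
      if 2 * c₀ ≤ (β₁ + ε₁ ω - ε₀ ω) ^ 2 then β₁ + ε₁ ω - ε₀ ω else 0)
    (y₀ y₁ b₀ : Ω → ℝ)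
    (hy₀ : ∀ ω, y₀ ω = β₀ + ε₀ ω) (hy₁ : ∀ ω, y₁ ω = β₀ + β₁ + ε₁ ω)
    (hb₀ : ∀ ω, b₀ ω = (y₀ ω + y₁ ω - b₁ ω) / 2) :
    ∫ ω, (b₀ ω - β₀ - β₁) ^ 2 ∂μ <
      ∫ ω, (b₀ ω + b₁ ω - β₀ - β₁) ^ 2 ∂μ := by
  obtain ⟨hp_half, hp_lt_one⟩ := hp
  set q : I := ⟨p, by linarith, hp_lt_one.le⟩
  have hlaw₀ := hdist₀.trans (ofReal_smul_dirac_add_eq_bernoulliMeasure (-1) d q)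
  have hlaw₁ := hdist₁.trans (ofReal_smul_dirac_add_eq_bernoulliMeasure (-1) d q)
  have hb : ∀ ω, b₁ ω = selectedSlope c₀ β₁ (ε₀ ω) (ε₁ ω) := hb₁
  have hL : ∀ ω, (b₀ ω - β₀ - β₁) ^ 2 = ((ε₀ ω + ε₁ ω - β₁ - b₁ ω) / 2) ^ 2 := fun ω => by
    rw [hb₀, hy₀, hy₁]; ring
  have hR : ∀ ω, (b₀ ω + b₁ ω - β₀ - β₁) ^ 2 = ((ε₀ ω + ε₁ ω - β₁ + b₁ ω) / 2) ^ 2 := fun ω => by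
    rw [hb₀, hy₀, hy₁]; ring
  simp_rw [hL, hR, hb]
  rw [integral_comp_of_indepFun_of_map_eq_bernoulliMeasure hmeas₀ hmeas₁ hindep hlaw₀ hlaw₁
      (G := fun e₀ e₁ => ((e₀ + e₁ - β₁ - selectedSlope c₀ β₁ e₀ e₁) / 2) ^ 2) (by fun_prop),
    integral_comp_of_indepFun_of_map_eq_bernoulliMeasure hmeas₀ hmeas₁ hindep hlaw₀ hlaw₁
      (G := fun e₀ e₁ => ((e₀ + e₁ - β₁ + selectedSlope c₀ β₁ e₀ e₁) / 2) ^ 2) (by fun_prop)]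
  have hs : 0 < √(2 * c₀) := hβ₁.trans h1
  rw [selectedSlope_of_abs_lt (e₀ := -1) (e₁ := -1) (by rw [abs_lt]; constructor <;> linarith),
    selectedSlope_of_abs_lt (e₀ := d) (e₁ := d) (by rw [abs_lt]; constructor <;> linarith),
    selectedSlope_of_abs_lt (e₀ := d) (e₁ := -1) (by rw [abs_lt]; constructor <;> linarith),
    selectedSlope_of_sqrt_le (e₀ := -1) (e₁ := d) (by linarith)]
  have hpq : 0 < p * (1 - p) := mul_pos (by linarith) (by linarith)
  have hsq : (β₁ + 1) ^ 2 < d ^ 2 := pow_lt_pow_left₀ (by linarith) (by linarith) two_ne_zero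
  linear_combination mul_lt_mul_of_pos_left hsq hpq

/-- Bernoulli-noise example. With `p ∈ (1/2, 1)`, `d = p/(1−p)`,
`ε₀, ε₁` i.i.d. taking value `−1` with probability `p` and `d` with
probability `1 − p`, penalties `c₁ = 0`, `c₀ > 0`, and parameters `β₁ > 0`
with `β₁ < √(2c₀)`, `d + 1 − β₁ < √(2c₀) ≤ d + 1 + β₁` and `β₁ < d − 1`,
the L₀-penalized estimator `b₁ = β₁ + ε₁ − ε₀` when `(β₁ + ε₁ − ε₀)² ≥ 2c₀`
(else `b₁ = 0`), `b₀ = (y₀ + y₁ − b₁)/2`, violates incentive-compatibility: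
an agent with `x = 1` is strictly better off reporting `r = 0`. -/
theorem stmt8 {Ω : Type*} [MeasurableSpace Ω] (μ : Measure Ω)
    [IsProbabilityMeasure μ]
    (p d : ℝ) (hp : 1 / 2 < p ∧ p < 1) (hd : d = p / (1 - p))
    (ε₀ ε₁ : Ω → ℝ)
    (hmeas₀ : Measurable ε₀) (hmeas₁ : Measurable ε₁)
    (hindep : IndepFun ε₀ ε₁ μ)
    (hdist₀ : μ.map ε₀ =
      ENNReal.ofReal p • Measure.dirac (-1 : ℝ)
        + ENNReal.ofReal (1 - p) • Measure.dirac d)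
    (hdist₁ : μ.map ε₁ =
      ENNReal.ofReal p • Measure.dirac (-1 : ℝ)
        + ENNReal.ofReal (1 - p) • Measure.dirac d)
    (β₀ β₁ c₀ : ℝ) (hc₀ : 0 < c₀) (hβ₁ : 0 < β₁)
    (h1 : β₁ < Real.sqrt (2 * c₀))
    (h2 : d + 1 - β₁ < Real.sqrt (2 * c₀))
    (h3 : Real.sqrt (2 * c₀) ≤ d + 1 + β₁)
    (h4 : β₁ < d - 1)
    (b₁ : Ω → ℝ)
    (hb₁ : ∀ ω, b₁ ω =
      if 2 * c₀ ≤ (β₁ + ε₁ ω - ε₀ ω) ^ 2 then β₁ + ε₁ ω - ε₀ ω else 0)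
    (y₀ y₁ b₀ : Ω → ℝ)
    (hy₀ : ∀ ω, y₀ ω = β₀ + ε₀ ω) (hy₁ : ∀ ω, y₁ ω = β₀ + β₁ + ε₁ ω)
    (hb₀ : ∀ ω, b₀ ω = (y₀ ω + y₁ ω - b₁ ω) / 2) :
    ∫ ω, (b₀ ω - β₀ - β₁) ^ 2 ∂μ <
      ∫ ω, (b₀ ω + b₁ ω - β₀ - β₁) ^ 2 ∂μ :=
  stmt8_general μ p d hp ε₀ ε₁ hmeas₀ hmeas₁ hindep hdist₀ hdist₁ β₀ β₁ c₀ hβ₁ h1 h2 h3 h4 b₁ hb₁ y₀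
    y₁ b₀ hy₀ hy₁ hb₀
end

section
/- Let p ∈ (1/2, 1) and d = p/(1−p), and let π be the probability vector on {−1, d}² given by π₍₋₁,₋₁₎ = p², π₍₋₁,d₎ = π₍d,₋₁₎ = p(1−p), π₍d,d₎ = (1−p)². Fix θ ∈ (−1, 1) and consider minimizing the relative entropy D(s‖π) = Σ_{i,j} s_{i,j}·ln(s_{i,j}/π_{i,j}) over probability vectors s = (s₍₋₁,₋₁₎, s₍₋₁,d₎, s₍d,₋₁₎, s₍d,d₎) with all coordinates strictly positive, subject to s₍d,₋₁₎ − s₍₋₁,d₎ = θ. Then the minimizer exists, is unique, and satisfies s₍d,₋₁₎·s₍₋₁,d₎ = s₍d,d₎·s₍₋₁,₋₁₎ and s₍₋₁,₋₁₎ = d²·s₍d,d₎. -/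
/-!
The constraint `s₂ - s₁ = θ` is linear, so the minimizer is the exponential tilt
`sᵢ = πᵢ x^{fᵢ} / Z` with `f = (0, -1, 1, 0)`, where `x > 0` (a positive root of a quadratic)
is chosen to meet the constraint. Since `log (s / π)` is affine in `f`, every feasible `t`
satisfies `D(t‖π) = D(t‖s) + D(s‖π)`, and Gibbs' inequality `D(t‖s) > 0` for `t ≠ s` gives
existence and uniqueness. The tilt leaves `π₀, π₃` unchanged and scales `π₁, π₂` by `x^{∓1}`,
so the two identities are inherited from the product structure of `π`.
-/

open scoped BigOperators

/-- Relative entropy (Kullback–Leibler divergence) of `s` with respect to `π`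
on a four-point space. Coordinates are indexed `0 ↔ (−1,−1)`, `1 ↔ (−1,d)`,
`2 ↔ (d,−1)`, `3 ↔ (d,d)`. -/
noncomputable def KL (π s : Fin 4 → ℝ) : ℝ :=
  ∑ i, s i * Real.log (s i / π i)

open Finset

section RelativeEntropy

open Real

lemma sub_le_mul_log_div {a b : ℝ} (ha : 0 < a) (hb : 0 < b) : a - b ≤ a * log (a / b) := by
  have h := one_sub_inv_le_log_of_pos (div_pos ha hb)
  rw [inv_div] at h
  have h' := mul_le_mul_of_nonneg_left h ha.le
  rwa [mul_sub, mul_one, mul_div_cancel₀ _ ha.ne'] at h'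

lemma sub_lt_mul_log_div {a b : ℝ} (ha : 0 < a) (hb : 0 < b) (hab : a ≠ b) :
    a - b < a * log (a / b) := by
  have hba : b / a ≠ 1 := by rwa [ne_eq, div_eq_one_iff_eq ha.ne', eq_comm]
  have h := log_lt_sub_one_of_pos (div_pos hb ha) hba
  have h' := mul_lt_mul_of_pos_left h ha
  rw [mul_sub, mul_one, mul_div_cancel₀ _ ha.ne', ← inv_div, log_inv] at h'
  linarith

variable {ι : Type*} [Fintype ι] {q s t : ι → ℝ}

theorem sum_mul_log_div_pos_of_ne (hs : ∀ i, 0 < s i) (ht : ∀ i, 0 < t i)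
    (hsum : ∑ i, t i = ∑ i, s i) (hne : t ≠ s) : 0 < ∑ i, t i * log (t i / s i) := by
  obtain ⟨j, hj⟩ := Function.ne_iff.mp hne
  have h := Finset.sum_lt_sum (fun i _ ↦ sub_le_mul_log_div (ht i) (hs i))
    ⟨j, mem_univ j, sub_lt_mul_log_div (ht j) (hs j) hj⟩
  rwa [sum_sub_distrib, hsum, sub_self] at h

/-- The Pythagorean identity of relative entropy along an exponential family. -/
theorem sum_mul_log_div_eq_of_log_div_affine {f : ι → ℝ} {a b : ℝ} (hq : ∀ i, 0 < q i)
    (hs : ∀ i, 0 < s i) (ht : ∀ i, 0 < t i) (hlog : ∀ i, log (s i / q i) = a + b * f i) :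
    ∑ i, t i * log (t i / q i) =
      ∑ i, t i * log (t i / s i) + (a * ∑ i, t i + b * ∑ i, t i * f i) := by
  have hsplit : ∀ i, log (t i / q i) = log (t i / s i) + (a + b * f i) := fun i ↦ by
    rw [← hlog, log_div (ht i).ne' (hq i).ne', log_div (ht i).ne' (hs i).ne',
      log_div (hs i).ne' (hq i).ne']
    ring
  rw [mul_sum, mul_sum, ← sum_add_distrib, ← sum_add_distrib]
  exact sum_congr rfl fun i _ ↦ by rw [hsplit]; ring

theorem sum_mul_log_div_lt_of_log_div_affine {f : ι → ℝ} {a b : ℝ} (hq : ∀ i, 0 < q i)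
    (hs : ∀ i, 0 < s i) (ht : ∀ i, 0 < t i) (hlog : ∀ i, log (s i / q i) = a + b * f i)
    (hsum : ∑ i, t i = ∑ i, s i) (hf : ∑ i, t i * f i = ∑ i, s i * f i) (hne : t ≠ s) :
    ∑ i, s i * log (s i / q i) < ∑ i, t i * log (t i / q i) := by
  have hself : ∑ i, s i * log (s i / s i) = 0 :=
    sum_eq_zero fun i _ ↦ by rw [div_self (hs i).ne', log_one, mul_zero]
  rw [sum_mul_log_div_eq_of_log_div_affine hq hs hs hlog, hself,
    sum_mul_log_div_eq_of_log_div_affine hq hs ht hlog, hsum, hf]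
  linarith [sum_mul_log_div_pos_of_ne hs ht hsum hne]

end RelativeEntropy

section ExpTilt

open Real

variable {ι : Type*} [Fintype ι] [Nonempty ι] {q : ι → ℝ} {f : ι → ℤ} {x : ℝ}

/-- The exponential tilt of `q` along `f`, parametrized by `x = e^λ`. -/
noncomputable def expTilt (q : ι → ℝ) (f : ι → ℤ) (x : ℝ) (i : ι) : ℝ :=
  q i * x ^ f i / ∑ j, q j * x ^ f j

lemma sum_zpow_mul_pos (hq : ∀ i, 0 < q i) (hx : 0 < x) : 0 < ∑ j, q j * x ^ f j :=
  sum_pos (fun j _ ↦ mul_pos (hq j) (zpow_pos hx _)) univ_nonempty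

lemma expTilt_pos (hq : ∀ i, 0 < q i) (hx : 0 < x) (i : ι) : 0 < expTilt q f x i :=
  div_pos (mul_pos (hq i) (zpow_pos hx _)) (sum_zpow_mul_pos hq hx)

lemma sum_expTilt (hq : ∀ i, 0 < q i) (hx : 0 < x) : ∑ i, expTilt q f x i = 1 := by
  simp only [expTilt]
  rw [← sum_div, div_self (sum_zpow_mul_pos hq hx).ne']

lemma log_expTilt_div (hq : ∀ i, 0 < q i) (hx : 0 < x) (i : ι) :
    log (expTilt q f x i / q i) = -log (∑ j, q j * x ^ f j) + log x * f i := by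
  have h : expTilt q f x i / q i = x ^ f i / ∑ j, q j * x ^ f j := by
    rw [expTilt]
    field_simp [(hq i).ne']
  rw [h, log_div (zpow_pos hx _).ne' (sum_zpow_mul_pos hq hx).ne', log_zpow]
  ring

theorem sum_mul_log_div_expTilt_lt {t : ι → ℝ} (hq : ∀ i, 0 < q i) (hx : 0 < x)
    (ht : ∀ i, 0 < t i) (hsum : ∑ i, t i = 1)
    (hf : ∑ i, t i * f i = ∑ i, expTilt q f x i * f i) (hne : t ≠ expTilt q f x) :
    ∑ i, expTilt q f x i * log (expTilt q f x i / q i) < ∑ i, t i * log (t i / q i) :=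
  sum_mul_log_div_lt_of_log_div_affine hq (expTilt_pos hq hx) ht (log_expTilt_div hq hx)
    (by rw [hsum, sum_expTilt hq hx]) hf hne

end ExpTilt

lemma exists_pos_quadratic_root {a b c : ℝ} (ha : 0 < a) (hc : c < 0) :
    ∃ x, 0 < x ∧ a * x ^ 2 + b * x + c = 0 := by
  have hdisc : b ^ 2 < b ^ 2 - 4 * a * c := by nlinarith
  have hb : b < √(b ^ 2 - 4 * a * c) :=
    (le_abs_self b).trans_lt (Real.sqrt_sq_eq_abs b ▸ Real.sqrt_lt_sqrt (sq_nonneg b) hdisc)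
  have hsq : √(b ^ 2 - 4 * a * c) ^ 2 = b ^ 2 - 4 * a * c :=
    Real.sq_sqrt ((sq_nonneg b).trans hdisc.le)
  set r := √(b ^ 2 - 4 * a * c)
  refine ⟨(-b + r) / (2 * a), div_pos (by linarith) (by positivity), ?_⟩
  field_simp
  linear_combination hsq

def diffStat : Fin 4 → ℤ := ![0, -1, 1, 0]

lemma sum_mul_diffStat (t : Fin 4 → ℝ) : ∑ i, t i * diffStat i = t 2 - t 1 := by
  simp [Fin.sum_univ_four, diffStat, sub_eq_neg_add]

lemma exists_expTilt_diffStat {q : Fin 4 → ℝ} (hq : ∀ i, 0 < q i) {θ : ℝ}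
    (hθ : -1 < θ ∧ θ < 1) :
    ∃ x, 0 < x ∧ expTilt q diffStat x 2 - expTilt q diffStat x 1 = θ := by
  obtain ⟨x, hx, hroot⟩ := exists_pos_quadratic_root (b := -θ * (q 0 + q 3))
    (mul_pos (hq 2) (by linarith : 0 < 1 - θ))
    (by nlinarith [hq 1] : -(q 1 * (1 + θ)) < 0)
  refine ⟨x, hx, ?_⟩
  have hZ := sum_zpow_mul_pos (f := diffStat) hq hx
  simp only [expTilt]
  rw [← sub_div, div_eq_iff hZ.ne']
  simp only [Fin.sum_univ_four, diffStat, Matrix.cons_val, zpow_neg, zpow_one, zpow_zero]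
  field_simp
  linear_combination hroot

/-- For `p ∈ (1/2,1)`, `d = p/(1−p)`,
`π = (p², p(1−p), p(1−p), (1−p)²)` and `θ ∈ (−1,1)`, the problem of
minimizing `D(s‖π)` over strictly positive probability vectors `s` with
`s₍d,₋₁₎ − s₍₋₁,d₎ = θ` has a unique minimizer, and it satisfies
`s₍d,₋₁₎·s₍₋₁,d₎ = s₍d,d₎·s₍₋₁,₋₁₎` and `s₍₋₁,₋₁₎ = d²·s₍d,d₎`. -/
theorem stmt10 (p d : ℝ) (hp : 1 / 2 < p ∧ p < 1) (hd : d = p / (1 - p))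
    (π : Fin 4 → ℝ)
    (hπ : π = ![p ^ 2, p * (1 - p), p * (1 - p), (1 - p) ^ 2])
    (θ : ℝ) (hθ : -1 < θ ∧ θ < 1) :
    ∃ s : Fin 4 → ℝ,
      ((∀ i, 0 < s i) ∧ (∑ i, s i) = 1 ∧ s 2 - s 1 = θ ∧
        ∀ t : Fin 4 → ℝ, (∀ i, 0 < t i) → (∑ i, t i) = 1 → t 2 - t 1 = θ →
          KL π s ≤ KL π t) ∧
      (∀ t : Fin 4 → ℝ,
        ((∀ i, 0 < t i) ∧ (∑ i, t i) = 1 ∧ t 2 - t 1 = θ ∧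
          ∀ u : Fin 4 → ℝ, (∀ i, 0 < u i) → (∑ i, u i) = 1 → u 2 - u 1 = θ →
            KL π t ≤ KL π u) → t = s) ∧
      s 2 * s 1 = s 3 * s 0 ∧ s 0 = d ^ 2 * s 3 := by
  have hp0 : 0 < p := by linarith
  have h1p : 0 < 1 - p := by linarith
  have hπpos : ∀ i, 0 < π i := by
    intro i
    fin_cases i <;> simp [hπ, hp0, h1p]
  obtain ⟨x, hx, hθx⟩ := exists_expTilt_diffStat hπpos hθ
  have hlt : ∀ t : Fin 4 → ℝ, (∀ i, 0 < t i) → ∑ i, t i = 1 → t 2 - t 1 = θ →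
      t ≠ expTilt π diffStat x → KL π (expTilt π diffStat x) < KL π t :=
    fun t ht hsum hdiff hne ↦ sum_mul_log_div_expTilt_lt hπpos hx ht hsum
      (by rw [sum_mul_diffStat, sum_mul_diffStat, hdiff, hθx]) hne
  refine ⟨expTilt π diffStat x,
    ⟨expTilt_pos hπpos hx, sum_expTilt hπpos hx, hθx, fun t ht hsum hdiff ↦ ?_⟩, ?_, ?_, ?_⟩
  · rcases eq_or_ne t (expTilt π diffStat x) with rfl | hne
    exacts [le_rfl, (hlt t ht hsum hdiff hne).le]
  · rintro t ⟨ht, hsum, hdiff, hmin⟩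
    by_contra hne
    exact (hlt t ht hsum hdiff hne).not_ge
      (hmin _ (expTilt_pos hπpos hx) (sum_expTilt hπpos hx) hθx)
  · simp only [expTilt, diffStat, hπ, Matrix.cons_val, zpow_neg, zpow_one, zpow_zero]
    field_simp
  · simp only [expTilt, diffStat, hπ, hd, Matrix.cons_val, zpow_zero]
    field_simp
end

section
/- Let p ∈ (1/2, 1), d = p/(1−p), and let π be the probability vector on {−1, d}² with π₍₋₁,₋₁₎ = p², π₍₋₁,d₎ = π₍d,₋₁₎ = p(1−p), π₍d,d₎ = (1−p)². Fix θ ∈ (0, 1), write q = θ(d+1), and let s be the strictly positive probability vector satisfying s₍d,₋₁₎ − s₍₋₁,d₎ = θ, s₍d,₋₁₎·s₍₋₁,d₎ = s₍d,d₎·s₍₋₁,₋₁₎, and s₍₋₁,₋₁₎ = d²·s₍d,d₎. Define ε̄₁ = (s₍d,₋₁₎ + s₍d,d₎)(d+1) − 1 and ε̄₀ = (s₍₋₁,d₎ + s₍d,d₎)(d+1) − 1. Then ε̄₀ = −q/2 − d/(d−1) + (1/2)√(q² + 4d²/(d−1)²) and ε̄₁ = q/2 − d/(d−1) + (1/2)√(q²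 + 4d²/(d−1)²). -/
open scoped BigOperators

/-- For `p ∈ (1/2,1)`, `d = p/(1−p)`, `θ ∈ (0,1)`,
`q = θ(d+1)`, let `s` (coordinates indexed `0 ↔ (−1,−1)`, `1 ↔ (−1,d)`,
`2 ↔ (d,−1)`, `3 ↔ (d,d)`) be a strictly positive probability vector with
`s₍d,₋₁₎ − s₍₋₁,d₎ = θ`, `s₍d,₋₁₎·s₍₋₁,d₎ = s₍d,d₎·s₍₋₁,₋₁₎` and
`s₍₋₁,₋₁₎ = d²·s₍d,d₎`. Then the implied average noises
`ε̄₁ = (s₍d,₋₁₎ + s₍d,d₎)(d+1) − 1` and `ε̄₀ = (s₍₋₁,d₎ + s₍d,d₎)(d+1) − 1`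
satisfy `ε̄₀ = −q/2 − d/(d−1) + (1/2)√(q² + 4d²/(d−1)²)` and
`ε̄₁ = q/2 − d/(d−1) + (1/2)√(q² + 4d²/(d−1)²)`. -/
theorem stmt12 (p d : ℝ) (hp : 1 / 2 < p ∧ p < 1) (hd : d = p / (1 - p))
    (θ : ℝ) (hθ : 0 < θ ∧ θ < 1) (q : ℝ) (hq : q = θ * (d + 1))
    (s : Fin 4 → ℝ) (hpos : ∀ i, 0 < s i) (hsum : (∑ i, s i) = 1)
    (h1 : s 2 - s 1 = θ) (h2 : s 2 * s 1 = s 3 * s 0)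
    (h3 : s 0 = d ^ 2 * s 3) :
    (s 1 + s 3) * (d + 1) - 1
        = -q / 2 - d / (d - 1)
          + (1 / 2) * Real.sqrt (q ^ 2 + 4 * d ^ 2 / (d - 1) ^ 2) ∧
    (s 2 + s 3) * (d + 1) - 1
        = q / 2 - d / (d - 1)
          + (1 / 2) * Real.sqrt (q ^ 2 + 4 * d ^ 2 / (d - 1) ^ 2) := by
  obtain ⟨hp1, hp2⟩ := hp
  obtain ⟨hθ1, hθ2⟩ := hθ
  have h1p : (0:ℝ) < 1 - p := by linarith
  have hd1 : 1 < d := by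
    rw [hd, lt_div_iff₀ h1p]; linarith
  have hdm : (0:ℝ) < d - 1 := by linarith
  have hdm0 : d - 1 ≠ 0 := ne_of_gt hdm
  subst hq
  have hA : s 0 + s 1 + s 2 + s 3 = 1 := by
    simpa [Fin.sum_univ_four] using hsum
  have hb0 : 2 * s 1 + θ + s 3 * (d ^ 2 + 1) = 1 := by
    linear_combination hA - h1 - h3
  have hB : s 1 * (s 1 + θ) = d ^ 2 * s 3 ^ 2 := by
    linear_combination h2 - s 1 * h1 + s 3 * h3
  have hv : (s 3 * (d ^ 2 - 1)) ^ 2 - 2 * s 3 * (d ^ 2 + 1) + 1 - θ ^ 2 = 0 := by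
    linear_combination 4 * hB - (1 - s 3 * (d ^ 2 + 1) + 2 * s 1 + θ) * hb0
  set X : ℝ := (s 1 + s 3) * (d + 1) - 1 with hX
  have hQ : (d - 1) * X ^ 2 + X * ((d - 1) * (θ * (d + 1)) + 2 * d) + (θ * (d + 1)) * d = 0 := by
    linear_combination ((d - 1) * ((d + 1) / 2) ^ 2) * hv +
      (((X + ((d + 1) * (1 - θ) / 2 - 1) - ((d + 1) / 2) * (s 3 * (d ^ 2 - 1)) + θ * (d + 1))
        * (d - 1) + 2 * d) * ((d + 1) / 2)) * hb0
  have hy : 0 ≤ 2 * X + θ * (d + 1) + 2 * d / (d - 1) := by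
    have h2d : 2 * d / (d - 1) = 2 + 2 / (d - 1) := by field_simp; ring
    have hpos1 := hpos 1
    have hpos3 := hpos 3
    have hfrac : 0 < 2 / (d - 1) := by positivity
    have hmul : 0 < (s 1 + s 3) * (d + 1) := by positivity
    rw [h2d]; nlinarith [mul_pos hθ1 (show (0:ℝ) < d + 1 by linarith)]
  have harg : (θ * (d + 1)) ^ 2 + 4 * d ^ 2 / (d - 1) ^ 2
      = (2 * X + θ * (d + 1) + 2 * d / (d - 1)) ^ 2 := by
    field_simp
    linear_combination (-4 * (d - 1)) * hQ
  have hsqrt : Real.sqrt ((θ * (d + 1)) ^ 2 + 4 * d ^ 2 / (d - 1) ^ 2)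
      = 2 * X + θ * (d + 1) + 2 * d / (d - 1) := by
    rw [harg, Real.sqrt_sq hy]
  constructor
  · rw [hsqrt]; ring
  · rw [hsqrt]
    have : s 2 = s 1 + θ := by linarith
    rw [this, hX]; ring
end

section
/- Let d > 1, c₀ > 0 and β₁ > 0 with β₁ < √(2c₀). Write q = √(2c₀) − β₁ and m = d/(d−1), and define ε̄₀ = −q/2 − m + (1/2)√(q² + 4m²) and ε̄₁ = q/2 − m + (1/2)√(q² + 4m²). Then −β₁² + 2β₁·ε̄₀ + ε̄₁² − ε̄₀² > 0 if and only if β₁ < c₀/(√(2c₀) + 2d/(d−1)). -/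
/-- For `d > 1`, `c₀ > 0`, `0 < β₁ < √(2c₀)`, with
`q = √(2c₀) − β₁`, `m = d/(d−1)`, `ε̄₀ = −q/2 − m + (1/2)√(q² + 4m²)` and
`ε̄₁ = q/2 − m + (1/2)√(q² + 4m²)`:
`−β₁² + 2β₁·ε̄₀ + ε̄₁² − ε̄₀² > 0` iff `β₁ < c₀/(√(2c₀) + 2d/(d−1))`. -/
theorem stmt13 (d c₀ β₁ : ℝ) (hd : 1 < d) (hc₀ : 0 < c₀) (hβ₁ : 0 < β₁)
    (hβ₁' : β₁ < Real.sqrt (2 * c₀))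
    (q m ε₀bar ε₁bar : ℝ)
    (hq : q = Real.sqrt (2 * c₀) - β₁) (hm : m = d / (d - 1))
    (hε₀ : ε₀bar = -q / 2 - m + (1 / 2) * Real.sqrt (q ^ 2 + 4 * m ^ 2))
    (hε₁ : ε₁bar = q / 2 - m + (1 / 2) * Real.sqrt (q ^ 2 + 4 * m ^ 2)) :
    0 < -β₁ ^ 2 + 2 * β₁ * ε₀bar + ε₁bar ^ 2 - ε₀bar ^ 2
      ↔ β₁ < c₀ / (Real.sqrt (2 * c₀) + 2 * d / (d - 1)) := by
  have hd1 : 0 < d - 1 := by linarith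
  set a := Real.sqrt (2 * c₀) with ha
  set S := Real.sqrt (q ^ 2 + 4 * m ^ 2) with hS
  have hm0 : 0 < m := by rw [hm]; positivity
  have ha0 : 0 < a := Real.sqrt_pos.mpr (by linarith)
  have hS0 : 0 ≤ S := Real.sqrt_nonneg _
  have hS2 : S ^ 2 = q ^ 2 + 4 * m ^ 2 := Real.sq_sqrt (by positivity)
  have ha2 : a ^ 2 = 2 * c₀ := Real.sq_sqrt (by linarith)
  have h2m : 2 * d / (d - 1) = 2 * m := by rw [hm]; ring
  have hE : -β₁ ^ 2 + 2 * β₁ * ε₀bar + ε₁bar ^ 2 - ε₀bar ^ 2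
      = a * (S - β₁ - 2 * m) := by rw [hε₀, hε₁, hq]; ring
  have hden : 0 < a + 2 * m := by linarith
  rw [hE, h2m, lt_div_iff₀ hden]
  constructor
  · intro h
    have h1 : β₁ + 2 * m < S := by nlinarith
    nlinarith
  · intro h
    have h1 : β₁ + 2 * m < S := by nlinarith
    nlinarith
end
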